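/- Let φ : ℝⁿ → ℝ be convex, f : ℝⁿ → ℝ differentiable, μ > 0, H a symmetric positive semidefinite n×n matrix, and G := H + μI. Fix x ∈ ℝⁿ and let x̄ be the unique minimizer of q̂(y) := f(x) + ⟨∇f(x), y − x⟩ + (1/2)⟨y − x, G(y − x)⟩ + φ(y). If x̃ ∈ ℝⁿ satisfies 0 ∈ ∇f(x̃) + ∂φ(x̃), then ⟨∇f(x) − ∇f(x̃) + G(x̃ − x), x̃ − x̄⟩ ≥ μ‖x̃ − x̄‖², and consequently ‖x̄ − x̃‖ ≤ (1/μ)·‖∇f(x) − ∇f(x̃) + G(x̃ − x)‖. -/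
import Mathlib


open scoped RealInnerProductSpace

noncomputable section

set_option maxHeartbeats 1600000

/-- The convex subdifferential of `g` at `y`. -/
def subdiff {n : ℕ} (g : EuclideanSpace ℝ (Fin n) → ℝ) (y : EuclideanSpace ℝ (Fin n)) :
    Set (EuclideanSpace ℝ (Fin n)) :=
  {v | ∀ z, g y + ⟪v, z - y⟫ ≤ g z}

/-- With `G = H + μI`, `H ⪰ 0` symmetric, `x̄` the minimizer of the regularized model `q̂`, and
`x̃` a stationary point of `f + φ`:
`⟨∇f(x) − ∇f(x̃) + G(x̃ − x), x̃ − x̄⟩ ≥ μ‖x̃ − x̄‖²` and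
`‖x̄ − x̃‖ ≤ (1/μ)‖∇f(x) − ∇f(x̃) + G(x̃ − x)‖`. -/
theorem stmt_14 {n : ℕ} (f φ : EuclideanSpace ℝ (Fin n) → ℝ)
    (hf : Differentiable ℝ f) (hφ : ConvexOn ℝ Set.univ φ)
    (μ : ℝ) (hμ : 0 < μ)
    (H : EuclideanSpace ℝ (Fin n) →L[ℝ] EuclideanSpace ℝ (Fin n))
    (hHsym : ∀ u v, ⟪H u, v⟫ = ⟪u, H v⟫) (hHpsd : ∀ u, 0 ≤ ⟪H u, u⟫)
    (G : EuclideanSpace ℝ (Fin n) →L[ℝ] EuclideanSpace ℝ (Fin n))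
    (hG : G = H + μ • ContinuousLinearMap.id ℝ (EuclideanSpace ℝ (Fin n)))
    (x : EuclideanSpace ℝ (Fin n)) (qhat : EuclideanSpace ℝ (Fin n) → ℝ)
    (hqhat : ∀ y, qhat y = f x + ⟪gradient f x, y - x⟫
        + (1 / 2) * ⟪y - x, G (y - x)⟫ + φ y)
    (xbar : EuclideanSpace ℝ (Fin n)) (hxbar : ∀ y, qhat xbar ≤ qhat y)
    (xt : EuclideanSpace ℝ (Fin n)) (hstat : -gradient f xt ∈ subdiff φ xt) :
    μ * ‖xt - xbar‖ ^ 2 ≤ ⟪gradient f x - gradient f xt + G (xt - x), xt - xbar⟫ ∧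
    ‖xbar - xt‖ ≤ (1 / μ) * ‖gradient f x - gradient f xt + G (xt - x)‖ := by
  classical
  set g := gradient f x with hg
  set gt := gradient f xt with hgt
  set d := xt - xbar with hd
  have hGsym : ∀ u v : EuclideanSpace ℝ (Fin n), ⟪G u, v⟫ = ⟪u, G v⟫ := by
    intro u v
    simp only [hG, ContinuousLinearMap.add_apply, ContinuousLinearMap.smul_apply,
      ContinuousLinearMap.id_apply, inner_add_left, inner_add_right,
      real_inner_smul_left, real_inner_smul_right, hHsym u v, real_inner_comm u v]
  have hGlower : ∀ u : EuclideanSpace ℝ (Fin n), μ * ‖u‖ ^ 2 ≤ ⟪u, G u⟫ := by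
    intro u
    have h1 : ⟪u, G u⟫ = ⟪H u, u⟫ + μ * ‖u‖ ^ 2 := by
      rw [hG]
      simp only [ContinuousLinearMap.add_apply, ContinuousLinearMap.smul_apply,
        ContinuousLinearMap.id_apply, inner_add_right, real_inner_smul_right,
        real_inner_self_eq_norm_sq]
      rw [real_inner_comm u (H u)]
      try ring
    have := hHpsd u
    linarith
  have key : ∀ t : ℝ, 0 < t → t ≤ 1 →
      0 ≤ ⟪g + G (xbar - x), d⟫ + (φ xt - φ xbar) + t * ((1/2) * ⟪d, G d⟫) := by
    intro t ht ht1
    have h1 := hxbar (xbar + t • d)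
    rw [hqhat, hqhat] at h1
    have hy : xbar + t • d - x = (xbar - x) + t • d := by abel
    have hconv : φ (xbar + t • d) ≤ (1 - t) * φ xbar + t * φ xt := by
      have hc := hφ.2 (Set.mem_univ xbar) (Set.mem_univ xt)
        (by linarith : (0:ℝ) ≤ 1 - t) ht.le (by ring)
      have heq : (1 - t) • xbar + t • xt = xbar + t • d := by
        rw [hd, smul_sub]; module
      rw [heq, smul_eq_mul, smul_eq_mul] at hc
      exact hc
    rw [hy] at h1
    have hcomm : ⟪xbar - x, G d⟫ = ⟪d, G (xbar - x)⟫ := by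
      rw [← hGsym d (xbar - x)]; exact real_inner_comm _ _
    have hexp : ⟪(xbar - x) + t • d, G ((xbar - x) + t • d)⟫
        = ⟪xbar - x, G (xbar - x)⟫ + 2 * t * ⟪d, G (xbar - x)⟫
          + t ^ 2 * ⟪d, G d⟫ := by
      rw [map_add, map_smul, inner_add_left, inner_add_right, inner_add_right]
      simp only [real_inner_smul_left, real_inner_smul_right]
      rw [hcomm]
      ring
    have hlin : ⟪g, (xbar - x) + t • d⟫ = ⟪g, xbar - x⟫ + t * ⟪g, d⟫ := by
      rw [inner_add_right, real_inner_smul_right]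
    rw [hexp, hlin] at h1
    have hGd : ⟪d, G (xbar - x)⟫ = ⟪G (xbar - x), d⟫ := real_inner_comm _ _
    have hsplit : ⟪g + G (xbar - x), d⟫ = ⟪g, d⟫ + ⟪G (xbar - x), d⟫ := by
      rw [inner_add_left]
    rw [hsplit]
    rw [hGd] at h1
    have h3 : φ (xbar + t • d) - φ xbar ≤ t * (φ xt - φ xbar) := by nlinarith [hconv]
    have h4 : 0 ≤ t * (⟪g, d⟫ + ⟪G (xbar - x), d⟫ + (φ xt - φ xbar)
        + t * ((1/2) * ⟪d, G d⟫)) := by nlinarith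
    have h5 : (0:ℝ) ≤ ⟪g, d⟫ + ⟪G (xbar - x), d⟫ + (φ xt - φ xbar)
        + t * ((1/2) * ⟪d, G d⟫) :=
      le_of_mul_le_mul_left (by linarith) ht
    linarith
  have hA : 0 ≤ ⟪g + G (xbar - x), d⟫ + (φ xt - φ xbar) := by
    have hB0 : 0 ≤ (1/2) * ⟪d, G d⟫ := by
      have h1 := hGlower d
      have h2 : 0 ≤ μ * ‖d‖ ^ 2 := by positivity
      linarith
    by_contra hcon
    push_neg at hcon
    obtain ⟨A, hAdef⟩ : ∃ A, A = ⟪g + G (xbar - x), d⟫ + (φ xt - φ xbar) := ⟨_, rfl⟩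
    obtain ⟨B, hBdef⟩ : ∃ B, B = (1/2) * ⟪d, G d⟫ := ⟨_, rfl⟩
    rw [← hAdef] at hcon
    rw [← hBdef] at hB0
    have hkey' : ∀ t : ℝ, 0 < t → t ≤ 1 → 0 ≤ A + t * B := by
      intro t h1 h2
      rw [hAdef, hBdef]
      exact key t h1 h2
    have hkey := hkey' (min 1 (-A / (2 * (B + 1))))
      (lt_min one_pos (div_pos (by linarith) (by linarith))) (min_le_left _ _)
    have htle : min 1 (-A / (2 * (B + 1))) ≤ -A / (2 * (B + 1)) := min_le_right _ _
    have htB : min 1 (-A / (2 * (B + 1))) * B ≤ (-A / (2 * (B + 1))) * B :=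
      mul_le_mul_of_nonneg_right htle hB0
    have hlt : (-A / (2 * (B + 1))) * B < -A := by
      rw [div_mul_eq_mul_div, div_lt_iff₀ (by linarith : (0:ℝ) < 2 * (B + 1))]
      nlinarith
    linarith
  have hst := hstat xbar
  have hst' : φ xt + ⟪gt, d⟫ ≤ φ xbar := by
    have hh : ⟪-gt, xbar - xt⟫ = ⟪gt, d⟫ := by
      rw [hd, show xbar - xt = -(xt - xbar) by abel, inner_neg_neg]
    rw [hh] at hst; exact hst
  have hmain : μ * ‖d‖ ^ 2 ≤ ⟪g - gt + G (xt - x), d⟫ := by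
    have hGxt : G (xt - x) = G (xbar - x) + G d := by
      rw [← map_add]; congr 1; rw [hd]; abel
    have hsplit : ⟪g - gt + G (xt - x), d⟫
        = (⟪g + G (xbar - x), d⟫ - ⟪gt, d⟫) + ⟪d, G d⟫ := by
      rw [hGxt, inner_add_left, inner_sub_left, inner_add_left, inner_add_left]
      rw [show ⟪G d, d⟫ = ⟪d, G d⟫ from hGsym d d]
      ring
    have := hGlower d
    linarith
  refine ⟨hmain, ?_⟩
  have hcs : ⟪g - gt + G (xt - x), d⟫ ≤ ‖g - gt + G (xt - x)‖ * ‖d‖ :=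
    real_inner_le_norm _ _
  have hnorm : ‖xbar - xt‖ = ‖d‖ := by rw [hd, norm_sub_rev]
  rw [hnorm]
  rcases eq_or_lt_of_le (norm_nonneg d) with hz | hz
  · rw [← hz]
    have : 0 ≤ ‖g - gt + G (xt - x)‖ := norm_nonneg _
    positivity
  · have h1 : μ * ‖d‖ ^ 2 ≤ ‖g - gt + G (xt - x)‖ * ‖d‖ := le_trans hmain hcs
    have h2 : μ * ‖d‖ ≤ ‖g - gt + G (xt - x)‖ := by nlinarith
    rw [one_div, ← div_eq_inv_mul, le_div_iff₀ hμ]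
    linarith [h2]
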